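/- Let ℚ(a, s) be the field of rational functions in two variables a and s over ℚ, let z = s − s⁻¹, and for partitions λ, μ define c_{λ,μ} = z(a C_λ(s²) − a⁻¹ C_μ(s⁻²)) + (a − a⁻¹)/z ∈ ℚ(a, s). Then the map (λ, μ) ↦ c_{λ,μ} is injective on ordered pairs of partitions: c_{λ,μ} = c_{λ′,μ′} implies λ = λ′ and μ = μ′. -/

import Mathlib

/-- A partition: a finite non-increasing list of positive integers. -/
structure YPartition where
  parts : List ℕ
  pos : ∀ p ∈ parts, 0 < p
  sorted : parts.Pairwise (· ≥ ·)

/-- The field `ℚ(a, s)` of rational functions in two variables over `ℚ`, realized as an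
iterated rational function field. -/
abbrev QasField : Type := RatFunc (RatFunc ℚ)

/-- The variable `a` in `ℚ(a, s)`. -/
noncomputable def aVar : QasField := RatFunc.C RatFunc.X

/-- The variable `s` in `ℚ(a, s)`. -/
noncomputable def sVar : QasField := RatFunc.X

/-- `z = s - s⁻¹` in `ℚ(a, s)`. -/
noncomputable def zVar : QasField := sVar - sVar⁻¹

/-- The evaluation `C_λ(s^(2ε)) = Σ_{(i,j) ∈ Y(λ)} s^(2ε(j-i))` of the content polynomial
of `λ` at `q = s^(2ε)` inside `ℚ(a, s)`; we use `ε = 1` for `C_λ(s²)` and `ε = -1` for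
`C_λ(s⁻²)`.  Rows and columns are indexed from `0`; the box in (0-indexed) row `i` and
column `j` has content `j - i`. -/
noncomputable def contentEval (ε : ℤ) (lam : YPartition) : QasField :=
  ∑ i ∈ Finset.range lam.parts.length, ∑ j ∈ Finset.range (lam.parts.getD i 0),
    sVar ^ (2 * ε * ((j : ℤ) - (i : ℤ)))

/-- The meridian eigenvalue `c_{λ,μ} = z(a C_λ(s²) − a⁻¹ C_μ(s⁻²)) + (a − a⁻¹)/z`. -/
noncomputable def meridianEigenvalue (lam mu : YPartition) : QasField :=
  zVar * (aVar * contentEval 1 lam - aVar⁻¹ * contentEval (-1) mu) +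
    (aVar - aVar⁻¹) / zVar

/-!
Cancelling `z ≠ 0` and multiplying by `a ≠ 0`, the equation `c_{λ,μ} = c_{λ',μ'}` becomes
`a² C_λ(s²) + C_{μ'}(s⁻²) = a² C_{λ'}(s²) + C_μ(s⁻²)`. In the Laurent expansion in `s` over `ℚ(a)`
the coefficient of `s^(2m)` is `a² n_λ(m) + n_{μ'}(-m)`, where `n_λ(m)` is the number of boxes of
content `m`; since `1` and `a²` are linearly independent over `ℚ`, the counts on both sides agree.
A partition is recovered from its content counts: its first part is one more than the largest
content, and deleting the first row shifts the contents of the remaining rows by one.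
-/

open scoped LaurentSeries

attribute [ext] YPartition

namespace RatFunc

variable {F : Type*} [Field F]

noncomputable def laurentCoeff (k : ℤ) : RatFunc F →+ F :=
  (HahnSeries.coeff.addMonoidHom k).comp (algebraMap (RatFunc F) F⸨X⸩).toAddMonoidHom

theorem laurentCoeff_C_mul (k : ℤ) (c : F) (f : RatFunc F) :
    laurentCoeff k (C c * f) = c * laurentCoeff k f := by
  simp [laurentCoeff, ← algebraMap_C, ← IsScalarTower.algebraMap_apply]

theorem laurentCoeff_X_zpow (k n : ℤ) :
    laurentCoeff k ((X : RatFunc F) ^ n) = if k = n then 1 else 0 := by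
  simp [laurentCoeff, ← single_zpow, HahnSeries.coeff_single]

theorem laurentCoeff_X_sq_mul_C_add_C (k : ℤ) (p q : F) :
    laurentCoeff k (X ^ 2 * C p + C q) = (if k = 2 then p else 0) + if k = 0 then q else 0 := by
  rw [map_add, mul_comm, ← zpow_ofNat, laurentCoeff_C_mul, ← mul_one (C q), ← zpow_zero X,
    laurentCoeff_C_mul, laurentCoeff_X_zpow, laurentCoeff_X_zpow]
  simp

theorem eq_and_eq_of_X_sq_mul_add_eq {p q p' q' : F}
    (h : X ^ 2 * C p + C q = X ^ 2 * C p' + C q') : p = p' ∧ q = q' :=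
  ⟨by simpa [laurentCoeff_X_sq_mul_C_add_C] using congrArg (laurentCoeff 2) h,
    by simpa [laurentCoeff_X_sq_mul_C_add_C] using congrArg (laurentCoeff 0) h⟩

end RatFunc

def contentCount (l : List ℕ) (m : ℤ) : ℕ :=
  ∑ i ∈ Finset.range l.length, ∑ j ∈ Finset.range (l.getD i 0),
    if (j : ℤ) - i = m then 1 else 0

theorem contentCount_cons (a : ℕ) (t : List ℕ) (m : ℤ) :
    contentCount (a :: t) m =
      (∑ j ∈ Finset.range a, if (j : ℤ) = m then 1 else 0) + contentCount t (m + 1) := by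
  simp only [contentCount, List.length_cons, Finset.sum_range_succ', List.getD_cons_succ,
    List.getD_cons_zero, Nat.cast_succ, Nat.cast_zero, sub_eq_iff_eq_add, add_zero, add_comm,
    add_left_comm]

theorem contentCount_cons_pred_ne_zero {a : ℕ} (ha : 0 < a) (t : List ℕ) :
    contentCount (a :: t) (a - 1) ≠ 0 := by
  rw [contentCount_cons]
  have hmem : (a - 1 : ℕ) ∈ Finset.range a := Finset.mem_range.2 (by omega)
  have hle := Finset.single_le_sum (f := fun j : ℕ => if (j : ℤ) = a - 1 then 1 else 0)
    (fun _ _ => Nat.zero_le _) hmem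
  simp only [Nat.cast_pred ha, if_true] at hle
  omega

theorem contentCount_eq_zero_of_le {l : List ℕ} {b : ℕ} (hl : ∀ p ∈ l, p ≤ b) {m : ℤ}
    (hm : b ≤ m) : contentCount l m = 0 := by
  refine Finset.sum_eq_zero fun i hi => Finset.sum_eq_zero fun j hj => if_neg ?_
  rw [Finset.mem_range] at hi hj
  have := hl _ (l.getElem_mem hi)
  rw [List.getD_eq_getElem l 0 hi] at hj
  omega

theorem le_of_contentCount_eq {a b : ℕ} (ha : 0 < a) {t l : List ℕ} (hl : ∀ p ∈ l, p ≤ b)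
    (h : ∀ m, contentCount (a :: t) m = contentCount l m) : a ≤ b := by
  by_contra! hba
  exact contentCount_cons_pred_ne_zero ha t <| (h _).trans <|
    contentCount_eq_zero_of_le hl (by omega)

theorem List.eq_of_contentCount_eq : ∀ {l l' : List ℕ}, (∀ p ∈ l, 0 < p) → l.Pairwise (· ≥ ·) →
    (∀ p ∈ l', 0 < p) → l'.Pairwise (· ≥ ·) → (∀ m, contentCount l m = contentCount l' m) →
    l = l'
  | [], [], _, _, _, _, _ => rfl
  | [], a' :: _, _, _, hpos', _, h => by
    have ha' := hpos' a' (by simp)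
    have := le_of_contentCount_eq ha' (b := 0) (by simp) fun m => (h m).symm
    omega
  | a :: _, [], hpos, _, _, _, h => by
    have ha := hpos a (by simp)
    have := le_of_contentCount_eq ha (b := 0) (by simp) h
    omega
  | a :: t, a' :: t', hpos, hs, hpos', hs', h => by
    rw [List.forall_mem_cons] at hpos hpos'
    rw [List.pairwise_cons] at hs hs'
    obtain rfl : a = a' := le_antisymm
      (le_of_contentCount_eq hpos.1 (List.forall_mem_cons.2 ⟨le_rfl, hs'.1⟩) h)
      (le_of_contentCount_eq hpos'.1 (List.forall_mem_cons.2 ⟨le_rfl, hs.1⟩) fun m => (h m).symm)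
    congr 1
    refine List.eq_of_contentCount_eq hpos.2 hs.2 hpos'.2 hs'.2 fun m => ?_
    simpa [contentCount_cons] using h (m - 1)

open RatFunc in
theorem laurentCoeff_contentEval {ε : ℤ} (hε : ε ≠ 0) (lam : YPartition) (m : ℤ) :
    laurentCoeff (2 * ε * m) (contentEval ε lam) = contentCount lam.parts m := by
  simp only [contentEval, sVar, contentCount, map_sum, laurentCoeff_X_zpow, Nat.cast_sum,
    Nat.cast_ite, Nat.cast_one, Nat.cast_zero]
  refine Finset.sum_congr rfl fun i _ => Finset.sum_congr rfl fun j _ => ?_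
  simp only [mul_right_inj' (mul_ne_zero two_ne_zero hε), eq_comm]

theorem aVar_ne_zero : aVar ≠ 0 :=
  (map_ne_zero RatFunc.C).2 RatFunc.X_ne_zero

open RatFunc in
theorem zVar_ne_zero : zVar ≠ 0 := by
  intro hz
  have := congrArg (laurentCoeff 1) hz
  rw [zVar, sVar, ← zpow_one X, ← zpow_neg, map_sub, laurentCoeff_X_zpow,
    laurentCoeff_X_zpow] at this
  norm_num at this

theorem contentEval_eq_of_meridianEigenvalue_eq {lam mu lam' mu' : YPartition}
    (h : meridianEigenvalue lam mu = meridianEigenvalue lam' mu') :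
    aVar ^ 2 * contentEval 1 lam + contentEval (-1) mu' =
      aVar ^ 2 * contentEval 1 lam' + contentEval (-1) mu := by
  have h' := mul_left_cancel₀ zVar_ne_zero (add_right_cancel h)
  have ha := aVar_ne_zero
  field_simp at h'
  linear_combination h'

theorem contentCount_eq_of_meridianEigenvalue_eq {lam mu lam' mu' : YPartition}
    (h : meridianEigenvalue lam mu = meridianEigenvalue lam' mu') (m : ℤ) :
    contentCount lam.parts m = contentCount lam'.parts m ∧
      contentCount mu'.parts (-m) = contentCount mu.parts (-m) := by
  have hm := congrArg (RatFunc.laurentCoeff (2 * m)) (contentEval_eq_of_meridianEigenvalue_eq h)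
  have hlam (lam : YPartition) :
      RatFunc.laurentCoeff (2 * m) (contentEval 1 lam) = contentCount lam.parts m := by
    simpa using laurentCoeff_contentEval one_ne_zero lam m
  have hmu (mu : YPartition) :
      RatFunc.laurentCoeff (2 * m) (contentEval (-1) mu) = contentCount mu.parts (-m) := by
    simpa using laurentCoeff_contentEval (neg_ne_zero.2 one_ne_zero) mu (-m)
  simp only [aVar, ← map_pow, map_add, RatFunc.laurentCoeff_C_mul, hlam, hmu,
    ← map_natCast RatFunc.C] at hm
  exact_mod_cast RatFunc.eq_and_eq_of_X_sq_mul_add_eq hm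

/-- The map `(λ, μ) ↦ c_{λ,μ}` is injective on ordered pairs of partitions:
`c_{λ,μ} = c_{λ′,μ′}` implies `λ = λ′` and `μ = μ′`. -/
theorem meridianEigenvalue_injective (lam mu lam' mu' : YPartition)
    (h : meridianEigenvalue lam mu = meridianEigenvalue lam' mu') :
    lam = lam' ∧ mu = mu' := by
  have hcounts := contentCount_eq_of_meridianEigenvalue_eq h
  exact ⟨YPartition.ext (List.eq_of_contentCount_eq lam.pos lam.sorted lam'.pos lam'.sorted
      fun m => (hcounts m).1),
    YPartition.ext (List.eq_of_contentCount_eq mu.pos mu.sorted mu'.pos mu'.sorted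
      fun m => by simpa using (hcounts (-m)).2.symm)⟩
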